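/- arXiv:1603.08332 — 5 statements merged into one kernel-verified Lean document; each statement's English description precedes it below -/
import Mathlib

section
/- For any positive integer p and nonnegative integers m, n, the stuffle product z_p^m * z_p^n equals the sum over i from 0 to min(m,n) of binom(m+n-2i, m-i) times the sum of all words containing the letter z_p exactly (m+n-2i) times and the letter z_{2p} exactly i times. -/
open MonoidAlgebra Finset

abbrev H : Type := MonoidAlgebra ℚ (FreeMonoid ℕ+)

noncomputable def word (w : List ℕ+) : H := MonoidAlgebra.single (FreeMonoid.ofList w) 1

noncomputable def z (k : ℕ+) : H := word [k]

noncomputable def st : List ℕ+ → List ℕ+ → H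
  | [], w => word w
  | k :: w1, [] => word (k :: w1)
  | k :: w1, l :: w2 =>
      z k * st w1 (l :: w2) + z l * st (k :: w1) w2 + z (k + l) * st w1 w2
termination_by a b => a.length + b.length
decreasing_by all_goals (simp; try omega)

/-!
Both sides satisfy the same recurrence in `(m, n)` with the same boundary values. Write `W(N, k)`
for the sum of the words of length `N` with `k` letters `z_{2p}` and all other letters `z_p`.
The stuffle `T(m, n)` of `z_p^m` and `z_p^n` satisfies
`T(m+1, n+1) = z_p (T(m, n+1) + T(m+1, n)) + z_{2p} T(m, n)`, and splitting off the first letter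
gives `W(N+1, k+1) = z_p W(N, k+1) + z_{2p} W(N, k)`. On the right-hand side, whose `i`-th term
is `binom(j + k, j) W(m + n - i, i)` with `j = m - i`, `k = n - i`, the recurrence then reduces to
Pascal's rule for `binom(j + k, j)`. Pascal's rule fails only at `j = k = 0`, where the
coefficient multiplies `W(i, i+1) = 0`.
-/

theorem Finset.sum_powersetCard_succ_insert {α β : Type*} [DecidableEq α] [AddCommMonoid β]
    {x : α} {s : Finset α} (hx : x ∉ s) (k : ℕ) (f : Finset α → β) :
    ∑ t ∈ powersetCard (k + 1) (insert x s), f t =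
      ∑ t ∈ powersetCard (k + 1) s, f t + ∑ t ∈ powersetCard k s, f (insert x t) := by
  have hxt : ∀ t ∈ powersetCard k s, x ∉ t := fun t ht h => hx ((mem_powersetCard.1 ht).1 h)
  rw [powersetCard_succ_insert hx, sum_union, sum_image]
  · exact fun t ht u hu htu => by
      rw [← erase_insert (hxt t ht), ← erase_insert (hxt u hu), htu]
  · refine disjoint_left.2 fun t ht ht' => ?_
    obtain ⟨u, -, rfl⟩ := mem_image.1 ht'
    exact hx ((mem_powersetCard.1 ht).1 (mem_insert_self x u))

theorem Fin.sum_powersetCard_univ_succ {β : Type*} [AddCommMonoid β] (N k : ℕ)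
    (f : Finset (Fin (N + 1)) → β) :
    ∑ S ∈ powersetCard (k + 1) univ, f S =
      ∑ S ∈ powersetCard (k + 1) univ, f (S.map (Fin.succEmb N)) +
        ∑ S ∈ powersetCard k univ, f (insert 0 (S.map (Fin.succEmb N))) := by
  rw [Fin.univ_succ, cons_eq_insert, sum_powersetCard_succ_insert (by simp), powersetCard_map,
    powersetCard_map, sum_map, sum_map]
  rfl

theorem eq_of_grid_recurrence {α : Type*} (f : α → α → α → α) {T T' : ℕ → ℕ → α}
    (hleft : ∀ n, T 0 n = T' 0 n) (hbottom : ∀ m, T m 0 = T' m 0)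
    (hT : ∀ m n, T (m + 1) (n + 1) = f (T m (n + 1)) (T (m + 1) n) (T m n))
    (hT' : ∀ m n, T' (m + 1) (n + 1) = f (T' m (n + 1)) (T' (m + 1) n) (T' m n)) (m n : ℕ) :
    T m n = T' m n := by
  induction m generalizing n with
  | zero => exact hleft n
  | succ m ihm =>
    induction n with
    | zero => exact hbottom _
    | succ n ihn => rw [hT, hT', ihm, ihm, ihn]

lemma st_nil_left (w : List ℕ+) : st [] w = word w := by rw [st]

lemma st_nil_right (w : List ℕ+) : st w [] = word w := by cases w <;> rw [st]

lemma st_replicate_succ_succ (p : ℕ+) (m n : ℕ) :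
    st (List.replicate (m + 1) p) (List.replicate (n + 1) p) =
      z p * (st (List.replicate m p) (List.replicate (n + 1) p) +
          st (List.replicate (m + 1) p) (List.replicate n p)) +
        z (2 * p) * st (List.replicate m p) (List.replicate n p) := by
  rw [List.replicate_succ, List.replicate_succ, st, ← List.replicate_succ, ← List.replicate_succ,
    mul_add, show p + p = 2 * p from PNat.eq (two_mul (p : ℕ)).symm]

lemma word_cons (k : ℕ+) (w : List ℕ+) : word (k :: w) = z k * word w := by
  simp [word, z, MonoidAlgebra.single_mul_single]

-- Zero unless `i ≤ min m n`, so that sums of `stuffleTerm` may run over any range past `min m n`.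
def stuffleCoeff (m n i : ℕ) : ℕ :=
  if i ≤ m ∧ i ≤ n then (m - i + (n - i)).choose (m - i) else 0

lemma stuffleCoeff_succ_succ {m n i : ℕ} (h : ¬(i = m + 1 ∧ i = n + 1)) :
    stuffleCoeff (m + 1) (n + 1) i = stuffleCoeff m (n + 1) i + stuffleCoeff (m + 1) n i := by
  unfold stuffleCoeff
  obtain hmn | him | hin | hout : (i ≤ m ∧ i ≤ n) ∨ (i = m + 1 ∧ i ≤ n) ∨ (i = n + 1 ∧ i ≤ m) ∨
      (m + 1 < i ∨ n + 1 < i) := by omega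
  · rw [if_pos (by omega), if_pos (by omega), if_pos (by omega),
      show m + 1 - i + (n + 1 - i) = m - i + (n - i) + 1 + 1 by omega,
      show m + 1 - i = m - i + 1 by omega, show m - i + (n + 1 - i) = m - i + (n - i) + 1 by omega,
      show m - i + 1 + (n - i) = m - i + (n - i) + 1 by omega, Nat.choose_succ_succ']
  · obtain ⟨rfl, hle⟩ := him
    rw [if_pos (by omega), if_neg (by omega), if_pos (by omega)]
    simp
  · obtain ⟨rfl, hle⟩ := hin
    rw [if_pos (by omega), if_pos (by omega), if_neg (by omega)]
    simp
  · rw [if_neg (by omega), if_neg (by omega), if_neg (by omega)]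

lemma stuffleCoeff_succ_succ_succ (m n i : ℕ) :
    stuffleCoeff (m + 1) (n + 1) (i + 1) = stuffleCoeff m n i := by
  simp [stuffleCoeff]

lemma stuffleCoeff_eq_zero {m n i : ℕ} (h : ¬(i ≤ m ∧ i ≤ n)) : stuffleCoeff m n i = 0 :=
  if_neg h

section Words

variable (a b : ℕ+)

def markedWord {N : ℕ} (S : Finset (Fin N)) : List ℕ+ :=
  List.ofFn fun j => if j ∈ S then b else a

lemma markedWord_map_succ {N : ℕ} (S : Finset (Fin N)) :
    markedWord a b (S.map (Fin.succEmb N)) = a :: markedWord a b S := by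
  simp [markedWord, List.ofFn_succ, Fin.succ_ne_zero]

lemma markedWord_insert_zero_map_succ {N : ℕ} (S : Finset (Fin N)) :
    markedWord a b (insert 0 (S.map (Fin.succEmb N))) = b :: markedWord a b S := by
  simp [markedWord, List.ofFn_succ, Fin.succ_ne_zero]

noncomputable def wordSum (N k : ℕ) : H :=
  ∑ S ∈ powersetCard k (univ : Finset (Fin N)), word (markedWord a b S)

lemma wordSum_zero (N : ℕ) : wordSum a b N 0 = word (List.replicate N a) := by
  simp [wordSum, markedWord, List.ofFn_const]

lemma wordSum_of_lt {N k : ℕ} (h : N < k) : wordSum a b N k = 0 := by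
  rw [wordSum, powersetCard_eq_empty.2 (by simpa using h), sum_empty]

lemma wordSum_succ_zero (N : ℕ) : wordSum a b (N + 1) 0 = z a * wordSum a b N 0 := by
  rw [wordSum_zero, wordSum_zero, List.replicate_succ, word_cons]

lemma wordSum_succ_succ (N k : ℕ) :
    wordSum a b (N + 1) (k + 1) = z a * wordSum a b N (k + 1) + z b * wordSum a b N k := by
  simp only [wordSum, Fin.sum_powersetCard_univ_succ, markedWord_map_succ,
    markedWord_insert_zero_map_succ, word_cons, mul_sum]

noncomputable def stuffleTerm (m n i : ℕ) : H :=
  (stuffleCoeff m n i : ℚ) • wordSum a b (m + n - i) i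

lemma stuffleTerm_succ_succ_zero (m n : ℕ) :
    stuffleTerm a b (m + 1) (n + 1) 0 =
      z a * (stuffleTerm a b m (n + 1) 0 + stuffleTerm a b (m + 1) n 0) := by
  rw [stuffleTerm, stuffleTerm, stuffleTerm, stuffleCoeff_succ_succ (by omega), Nat.cast_add,
    add_smul, show m + 1 + (n + 1) - 0 = m + n + 1 + 1 by omega,
    show m + (n + 1) - 0 = m + n + 1 by omega, show m + 1 + n - 0 = m + n + 1 by omega,
    wordSum_succ_zero, mul_add, mul_smul_comm, mul_smul_comm]

lemma stuffleTerm_succ_succ_succ (m n i : ℕ) :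
    stuffleTerm a b (m + 1) (n + 1) (i + 1) =
      z a * (stuffleTerm a b m (n + 1) (i + 1) + stuffleTerm a b (m + 1) n (i + 1)) +
        z b * stuffleTerm a b m n i := by
  by_cases hi : i ≤ m ∧ i ≤ n
  swap
  · have h1 : ¬(i + 1 ≤ m ∧ i + 1 ≤ n + 1) := by omega
    have h2 : ¬(i + 1 ≤ m + 1 ∧ i + 1 ≤ n) := by omega
    simp only [stuffleTerm, stuffleCoeff_succ_succ_succ, stuffleCoeff_eq_zero hi,
      stuffleCoeff_eq_zero h1, stuffleCoeff_eq_zero h2, Nat.cast_zero, zero_smul, add_zero,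
      mul_zero]
  have hpascal : (stuffleCoeff (m + 1) (n + 1) (i + 1) : ℚ) • wordSum a b (m + n - i) (i + 1) =
      (stuffleCoeff m (n + 1) (i + 1) + stuffleCoeff (m + 1) n (i + 1) : ℚ) •
        wordSum a b (m + n - i) (i + 1) := by
    by_cases hmn : i = m ∧ i = n
    · rw [wordSum_of_lt _ _ (by omega), smul_zero, smul_zero]
    · rw [stuffleCoeff_succ_succ (by omega), Nat.cast_add]
  rw [stuffleTerm, stuffleTerm, stuffleTerm, stuffleTerm,
    show m + 1 + (n + 1) - (i + 1) = m + n - i + 1 by omega,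
    show m + (n + 1) - (i + 1) = m + n - i by omega,
    show m + 1 + n - (i + 1) = m + n - i by omega, wordSum_succ_succ, smul_add,
    ← mul_smul_comm, ← mul_smul_comm, hpascal, stuffleCoeff_succ_succ_succ, add_smul, mul_add]

noncomputable def stuffleSum (m n : ℕ) : H :=
  ∑ i ∈ range (min m n + 1), stuffleTerm a b m n i

lemma sum_range_stuffleTerm {m n K : ℕ} (h : min m n < K) :
    ∑ i ∈ range K, stuffleTerm a b m n i = stuffleSum a b m n := by
  obtain ⟨d, rfl⟩ := Nat.exists_eq_add_of_le h
  rw [sum_range_add, stuffleSum, add_eq_left]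
  refine sum_eq_zero fun i _ => ?_
  rw [stuffleTerm, stuffleCoeff_eq_zero (by omega), Nat.cast_zero, zero_smul]

lemma stuffleSum_zero_left (n : ℕ) : stuffleSum a b 0 n = word (List.replicate n a) := by
  simp [stuffleSum, stuffleTerm, stuffleCoeff, wordSum_zero]

lemma stuffleSum_zero_right (m : ℕ) : stuffleSum a b m 0 = word (List.replicate m a) := by
  simp [stuffleSum, stuffleTerm, stuffleCoeff, wordSum_zero]

lemma stuffleSum_succ_succ (m n : ℕ) :
    stuffleSum a b (m + 1) (n + 1) =
      z a * (stuffleSum a b m (n + 1) + stuffleSum a b (m + 1) n) + z b * stuffleSum a b m n := by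
  rw [← sum_range_stuffleTerm a b (K := m + n + 2) (by omega),
    ← sum_range_stuffleTerm a b (m := m) (n := n + 1) (K := m + n + 2) (by omega),
    ← sum_range_stuffleTerm a b (m := m + 1) (n := n) (K := m + n + 2) (by omega),
    ← sum_range_stuffleTerm a b (m := m) (n := n) (K := m + n + 1) (by omega)]
  simp only [sum_range_succ' _ (m + n + 1), stuffleTerm_succ_succ_zero, stuffleTerm_succ_succ_succ,
    sum_add_distrib, mul_add, mul_sum]
  abel

end Words

theorem stuffle_pow_pow (p : ℕ+) (m n : ℕ) :
    st (List.replicate m p) (List.replicate n p) =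
      ∑ i ∈ Finset.range (min m n + 1),
        (Nat.choose (m + n - 2 * i) (m - i) : ℚ) •
          ∑ S ∈ Finset.powersetCard i (Finset.univ : Finset (Fin (m + n - 2 * i + i))),
            word (List.ofFn fun j => if j ∈ S then 2 * p else p) := by
  have hst : st (List.replicate m p) (List.replicate n p) = stuffleSum p (2 * p) m n :=
    eq_of_grid_recurrence (fun x y w => z p * (x + y) + z (2 * p) * w)
      (T := fun m n => st (List.replicate m p) (List.replicate n p))
      (fun n => by rw [List.replicate_zero, st_nil_left, stuffleSum_zero_left])
      (fun m => by rw [List.replicate_zero, st_nil_right, stuffleSum_zero_right])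
      (st_replicate_succ_succ p) (stuffleSum_succ_succ p (2 * p)) m n
  rw [hst, stuffleSum]
  refine sum_congr rfl fun i hi => ?_
  have hi : i ≤ m ∧ i ≤ n := by rw [mem_range] at hi; omega
  rw [stuffleTerm, stuffleCoeff, if_pos hi, show m - i + (n - i) = m + n - 2 * i by omega,
    show m + n - i = m + n - 2 * i + i by omega]
  rfl
end

section
/- Let m, n, k_1,…,k_m, l_1,…,l_n be positive integers and 1 ≤ j ≤ m. Then z_{k_1}⋯z_{k_m} * z_{l_1}⋯z_{l_n} = Σ_{i=0}^{n} [ (z_{k_1}⋯z_{k_{j-1}} * z_{l_1}⋯z_{l_i}) z_{k_j} + (z_{k_1}⋯z_{k_{j-1}} * z_{l_1}⋯z_{l_{i-1}}) z_{k_j+l_i} ] (z_{k_{j+1}}⋯z_{k_m} * z_{l_{i+1}}⋯z_{l_n}), with the conventions that an empty word product z_{k_i}⋯z_{k_{i-1}} = 1 and z_{k_i}⋯z_{k_{i-2}} = 0. -/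
/-!
Write `a = x ++ k :: y` with `x` the first `j - 1` letters. The expansion is proved for all `x`
and `b` by induction on `x` and, inside, on `b`: peeling the first letters `k₁` of `x` and `l` of
`b` with the defining recursion of `*` turns the sum for `(k₁ :: x, l :: b)` into the three sums for
`(x, l :: b)`, `(k₁ :: x, b)` and `(x, b)`, the latter two shifted by one in the summation index.
When `x = []` only the letter `l` can be peeled, and the leftover `z (k + l) * st y b` is
exactly the `i = 1` term of the sum.
-/

open MonoidAlgebra Finset

lemma word_mul (u v : List ℕ+) : word u * word v = word (u ++ v) := by
  simp [word, MonoidAlgebra.single_mul_single]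

lemma word_nil : word [] = 1 := by
  simp [word, MonoidAlgebra.one_def]

lemma st_cons_cons (k l : ℕ+) (w₁ w₂ : List ℕ+) :
    st (k :: w₁) (l :: w₂) =
      z k * st w₁ (l :: w₂) + z l * st (k :: w₁) w₂ + z (k + l) * st w₁ w₂ := by
  rw [st]

lemma st_cons_nil (k : ℕ+) (w : List ℕ+) : st (k :: w) [] = z k * st w [] := by
  rw [st_nil_right, st_nil_right, word_cons]

lemma st_nil_cons (l : ℕ+) (w : List ℕ+) : st [] (l :: w) = z l * st [] w := by
  rw [st_nil_left, st_nil_left, word_cons]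

noncomputable def stSummand (x : List ℕ+) (k : ℕ+) (y b : List ℕ+) (i : ℕ) : H :=
  (st x (b.take i) * z k
    + if 1 ≤ i then st x (b.take (i - 1)) * z (k + b.getD (i - 1) 1) else 0)
  * st y (b.drop i)

lemma stSummand_zero (x : List ℕ+) (k : ℕ+) (y b : List ℕ+) :
    stSummand x k y b 0 = st x [] * (z k * st y b) := by
  simp [stSummand, mul_assoc]

lemma stSummand_nil_cons_succ (k l : ℕ+) (y b : List ℕ+) (i : ℕ) :
    stSummand [] k y (l :: b) (i + 1)
      = z l * stSummand [] k y b i + if i = 0 then z (k + l) * st y b else 0 := by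
  rcases i with _ | i
  · simp [stSummand, st_nil_left, word_cons, word_nil, add_mul, mul_assoc]
  · simp [stSummand, st_nil_cons, mul_add, add_mul, mul_assoc]

lemma stSummand_cons_cons_succ (k k₁ l : ℕ+) (x y b : List ℕ+) (i : ℕ) :
    stSummand (k₁ :: x) k y (l :: b) (i + 1)
      = z k₁ * stSummand x k y (l :: b) (i + 1) + z l * stSummand (k₁ :: x) k y b i
        + z (k₁ + l) * stSummand x k y b i := by
  rcases i with _ | i
  · simp only [stSummand, List.take_succ_cons, List.take_zero, List.drop_succ_cons,
      List.drop_zero, List.getD_cons_zero, Nat.add_sub_cancel, le_refl, if_true,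
      Nat.one_le_iff_ne_zero, ne_eq, not_true, if_false, st_cons_cons, st_cons_nil,
      mul_add, add_mul, mul_assoc, add_zero]
    abel
  · simp only [stSummand, List.take_succ_cons, List.drop_succ_cons, List.getD_cons_succ,
      Nat.add_sub_cancel, Nat.le_add_left, if_true, st_cons_cons,
      mul_add, add_mul, mul_assoc]
    abel

theorem st_append_cons (x : List ℕ+) (k : ℕ+) (y b : List ℕ+) :
    st (x ++ k :: y) b = ∑ i ∈ range (b.length + 1), stSummand x k y b i := by
  induction x generalizing b with
  | nil =>
    induction b with
    | nil => simp [stSummand, st_nil_right, word_nil, word_cons]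
    | cons l b ih =>
      rw [List.nil_append] at ih ⊢
      rw [st_cons_cons, ih, List.length_cons, sum_range_succ' (stSummand [] k y (l :: b))]
      simp only [stSummand_nil_cons_succ, stSummand_zero, st_nil_left, word_nil, one_mul,
        sum_add_distrib, ← mul_sum, sum_ite_eq', mem_range, Nat.zero_lt_succ, if_true]
      abel
  | cons k₁ x ihx =>
    induction b with
    | nil => simp [stSummand, st_nil_right, z, word_mul]
    | cons l b ihb =>
      rw [List.cons_append] at ihb ⊢
      rw [st_cons_cons, ihb, ihx (l :: b), ihx b, List.length_cons,
        sum_range_succ' (stSummand x k y (l :: b)),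
        sum_range_succ' (stSummand (k₁ :: x) k y (l :: b))]
      simp only [stSummand_cons_cons_succ, stSummand_zero, st_cons_nil, sum_add_distrib,
        ← mul_sum, mul_add, mul_assoc]
      abel

theorem st_recursive_general (a b : List ℕ+) (j : ℕ)
    (hj1 : 1 ≤ j) (hj2 : j ≤ a.length) :
    st a b =
      ∑ i ∈ Finset.range (b.length + 1),
        (st (a.take (j - 1)) (b.take i) * z (a.getD (j - 1) 1)
          + if 1 ≤ i then
              st (a.take (j - 1)) (b.take (i - 1)) * z (a.getD (j - 1) 1 + b.getD (i - 1) 1)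
            else 0)
        * st (a.drop j) (b.drop i) := by
  obtain ⟨i, rfl⟩ : ∃ i, j = i + 1 := ⟨j - 1, by omega⟩
  have hi : i < a.length := by omega
  rw [Nat.add_sub_cancel, List.getD_eq_getElem a 1 hi]
  conv_lhs => rw [← List.take_append_drop i a, List.drop_eq_getElem_cons hi]
  exact st_append_cons _ _ _ b

theorem st_recursive (a b : List ℕ+) (hn : 1 ≤ b.length) (j : ℕ)
    (hj1 : 1 ≤ j) (hj2 : j ≤ a.length) :
    st a b =
      ∑ i ∈ Finset.range (b.length + 1),
        (st (a.take (j - 1)) (b.take i) * z (a.getD (j - 1) 1)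
          + if 1 ≤ i then
              st (a.take (j - 1)) (b.take (i - 1)) * z (a.getD (j - 1) 1 + b.getD (i - 1) 1)
            else 0)
        * st (a.drop j) (b.drop i) :=
  st_recursive_general a b j hj1 hj2
end

section
/- Let m, n, k_1,…,k_m, l_1,…,l_n be positive integers and 1 ≤ j ≤ m. Then z_{k_1}⋯z_{k_m} ⋆̄ z_{l_1}⋯z_{l_n} = Σ_{i=0}^{n} [ (z_{k_1}⋯z_{k_{j-1}} ⋆̄ z_{l_1}⋯z_{l_i}) z_{k_j} − (z_{k_1}⋯z_{k_{j-1}} ⋆̄ z_{l_1}⋯z_{l_{i-1}}) z_{k_j+l_i} ] (z_{k_{j+1}}⋯z_{k_m} ⋆̄ z_{l_{i+1}}⋯z_{l_n}), with the conventions that an empty word is 1 and a word with index range of length -1 is 0. -/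
open MonoidAlgebra Finset

noncomputable def stbar : List ℕ+ → List ℕ+ → H
  | [], w => word w
  | k :: w1, [] => word (k :: w1)
  | k :: w1, l :: w2 =>
      z k * stbar w1 (l :: w2) + z l * stbar (k :: w1) w2 - z (k + l) * stbar w1 w2
termination_by a b => a.length + b.length
decreasing_by all_goals (simp; try omega)

lemma word_append (x y : List ℕ+) : word (x ++ y) = word x * word y := by
  induction x with
  | nil => rw [List.nil_append, word_nil, one_mul]
  | cons p x ih => rw [List.cons_append, word_cons, word_cons, ih, mul_assoc]

lemma stbar_nil_left (w : List ℕ+) : stbar [] w = word w := by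
  cases w <;> simp [stbar]

lemma stbar_nil_right (w : List ℕ+) : stbar w [] = word w := by
  cases w <;> simp [stbar]

lemma stbar_cons_cons (k l : ℕ+) (w₁ w₂ : List ℕ+) :
    stbar (k :: w₁) (l :: w₂) =
      z k * stbar w₁ (l :: w₂) + z l * stbar (k :: w₁) w₂ - z (k + l) * stbar w₁ w₂ := by
  rw [stbar]

noncomputable def splitTerm (u : List ℕ+) (k : ℕ+) (v b : List ℕ+) (i : ℕ) : H :=
  (stbar u (b.take i) * z k
    - if 1 ≤ i then stbar u (b.take (i - 1)) * z (k + b.getD (i - 1) 1) else 0)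
  * stbar v (b.drop i)

lemma splitTerm_zero (u : List ℕ+) (k : ℕ+) (v b : List ℕ+) :
    splitTerm u k v b 0 = word u * z k * stbar v b := by
  simp [splitTerm, stbar_nil_right]

lemma splitTerm_succ (u : List ℕ+) (k : ℕ+) (v b : List ℕ+) (i : ℕ) :
    splitTerm u k v b (i + 1) =
      (stbar u (b.take (i + 1)) * z k - stbar u (b.take i) * z (k + b.getD i 1))
        * stbar v (b.drop (i + 1)) :=
  rfl

lemma splitTerm_nil_succ (k l : ℕ+) (v b : List ℕ+) (i : ℕ) :
    splitTerm [] k v (l :: b) (i + 1) =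
      z l * splitTerm [] k v b i - if i = 0 then z (k + l) * stbar v b else 0 := by
  cases i with
  | zero =>
    simp only [splitTerm_succ, splitTerm_zero, List.take_succ_cons, List.take_zero,
      List.getD_cons_zero, List.drop_succ_cons, List.drop_zero, stbar_nil_left, word_cons, word_nil]
    noncomm_ring
  | succ i =>
    simp only [splitTerm_succ, List.take_succ_cons, List.getD_cons_succ, List.drop_succ_cons,
      stbar_nil_left, word_cons, if_neg (Nat.succ_ne_zero _)]
    noncomm_ring

lemma splitTerm_cons_succ (p : ℕ+) (u : List ℕ+) (k : ℕ+) (v : List ℕ+) (l : ℕ+)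
    (b : List ℕ+) (i : ℕ) :
    splitTerm (p :: u) k v (l :: b) (i + 1) =
      z p * splitTerm u k v (l :: b) (i + 1) + z l * splitTerm (p :: u) k v b i
        - z (p + l) * splitTerm u k v b i := by
  cases i with
  | zero =>
    simp only [splitTerm_succ, splitTerm_zero, List.take_succ_cons, List.take_zero,
      List.getD_cons_zero, List.drop_succ_cons, List.drop_zero, stbar_cons_cons, stbar_nil_right,
      word_cons]
    noncomm_ring
  | succ i =>
    simp only [splitTerm_succ, List.take_succ_cons, List.getD_cons_succ, List.drop_succ_cons,
      stbar_cons_cons]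
    noncomm_ring

lemma stbar_cons_eq_sum (k : ℕ+) (v b : List ℕ+) :
    stbar (k :: v) b = ∑ i ∈ range (b.length + 1), splitTerm [] k v b i := by
  induction b with
  | nil => simp [splitTerm_zero, stbar_nil_right, word_cons, word_nil]
  | cons l b ih =>
    simp only [List.length_cons, sum_range_succ' _ (b.length + 1), splitTerm_nil_succ,
      sum_sub_distrib, ← mul_sum, ← ih, sum_ite_eq', mem_range, Nat.zero_lt_succ, if_true,
      splitTerm_zero, stbar_cons_cons, word_nil]
    noncomm_ring

lemma stbar_append_cons_eq_sum (u : List ℕ+) (k : ℕ+) (v b : List ℕ+) :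
    stbar (u ++ k :: v) b = ∑ i ∈ range (b.length + 1), splitTerm u k v b i := by
  induction u generalizing b with
  | nil => exact stbar_cons_eq_sum k v b
  | cons p u ihu =>
    induction b with
    | nil => simp [splitTerm_zero, stbar_nil_right, word_append, word_cons, mul_assoc]
    | cons l b ihb =>
      have hu := ihu (l :: b)
      rw [List.length_cons, sum_range_succ'] at hu
      rw [List.length_cons, sum_range_succ', List.cons_append, stbar_cons_cons,
        ← List.cons_append, hu, ihb, ihu]
      simp only [splitTerm_cons_succ, sum_add_distrib, sum_sub_distrib, ← mul_sum,
        splitTerm_zero, word_cons]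
      noncomm_ring

theorem stbar_recursive_general (a b : List ℕ+) (j : ℕ)
    (hj1 : 1 ≤ j) (hj2 : j ≤ a.length) :
    stbar a b =
      ∑ i ∈ Finset.range (b.length + 1),
        (stbar (a.take (j - 1)) (b.take i) * z (a.getD (j - 1) 1)
          - if 1 ≤ i then
              stbar (a.take (j - 1)) (b.take (i - 1)) * z (a.getD (j - 1) 1 + b.getD (i - 1) 1)
            else 0)
        * stbar (a.drop j) (b.drop i) := by
  obtain ⟨j, rfl⟩ : ∃ n, j = n + 1 := ⟨j - 1, by omega⟩
  have hj : j < a.length := by omega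
  have ha : a = a.take j ++ a.getD j 1 :: a.drop (j + 1) := by
    rw [List.getD_eq_getElem a 1 hj, ← List.drop_eq_getElem_cons hj, List.take_append_drop]
  conv_lhs => rw [ha]
  exact stbar_append_cons_eq_sum _ _ _ b

theorem stbar_recursive (a b : List ℕ+) (hn : 1 ≤ b.length) (j : ℕ)
    (hj1 : 1 ≤ j) (hj2 : j ≤ a.length) :
    stbar a b =
      ∑ i ∈ Finset.range (b.length + 1),
        (stbar (a.take (j - 1)) (b.take i) * z (a.getD (j - 1) 1)
          - if 1 ≤ i then
              stbar (a.take (j - 1)) (b.take (i - 1)) * z (a.getD (j - 1) 1 + b.getD (i - 1) 1)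
            else 0)
        * stbar (a.drop j) (b.drop i) :=
  stbar_recursive_general a b j hj1 hj2
end

section
/- The product ⋆̄ defined recursively on the free noncommutative algebra Q⟨z_1, z_2, …⟩ is commutative and associative. -/
open MonoidAlgebra Finset

noncomputable def stuffleBar (x y : H) : H :=
  Finsupp.sum x.coeff fun w1 c1 =>
    Finsupp.sum y.coeff fun w2 c2 =>
      (c1 * c2) • stbar (FreeMonoid.toList w1) (FreeMonoid.toList w2)

/-! The recursion defining `stbar` is symmetric in its two arguments, which gives commutativity.
For associativity, extend `stbar` bilinearly to `⋆̄`. The recursion then holds for arbitrary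
`z k * X` and `z l * Y`, so `((z k * X) ⋆̄ (z l * Y)) ⋆̄ (z n * W)` expands into seven triple
products of shorter factors. On words, the rotation invariance `(u ⋆̄ v) ⋆̄ w = (v ⋆̄ w) ⋆̄ u`
follows by induction on total length: after one rotation of each term on the left, the two
expansions agree term by term. Associativity is rotation followed by commutativity. -/

lemma z_mul_word (k : ℕ+) (w : List ℕ+) : z k * word w = word (k :: w) := by
  simp only [z, word, single_mul_single, one_mul]
  rfl

lemma single_eq_smul_word (u : FreeMonoid ℕ+) (c : ℚ) : single u c = c • word u.toList := by
  rw [word, smul_single', mul_one]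
  rfl

@[elab_as_elim]
lemma H.induction_on_word {motive : H → Prop} (x : H) (zero : motive 0)
    (add : ∀ x y, motive x → motive y → motive (x + y))
    (smul_word : ∀ (c : ℚ) (w : List ℕ+), motive (c • word w)) : motive x :=
  induction_linear x zero add fun u c => single_eq_smul_word u c ▸ smul_word c u.toList

lemma stbar_comm : ∀ a b : List ℕ+, stbar a b = stbar b a
  | [], b => by rw [stbar_nil_left, stbar_nil_right]
  | k :: a, [] => by rw [stbar_nil_left, stbar_nil_right]
  | k :: a, l :: b => by
    rw [stbar, stbar, stbar_comm a, stbar_comm (k :: a) b, stbar_comm a b, add_comm l k]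
    abel
termination_by a b => a.length + b.length

noncomputable def stuffleBarₗ : H →ₗ[ℚ] H →ₗ[ℚ] H :=
  (basis _ ℚ).constr ℚ fun u => (basis _ ℚ).constr ℚ fun v => stbar u.toList v.toList

local infixl:70 " ⋆̄ " => stuffleBarₗ

lemma stuffleBarₗ_word (a b : List ℕ+) : word a ⋆̄ word b = stbar a b := by
  have hword (w : List ℕ+) : word w = basis _ ℚ (FreeMonoid.ofList w) := rfl
  simp only [stuffleBarₗ, hword, Module.Basis.constr_basis]
  rfl

lemma stuffleBar_eq_stuffleBarₗ (x y : H) : stuffleBar x y = x ⋆̄ y := by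
  simp only [stuffleBar, stuffleBarₗ, Module.Basis.constr_apply, LinearMap.finsupp_sum_apply,
    LinearMap.smul_apply, Finsupp.smul_sum, mul_smul]
  rfl

lemma stuffleBarₗ_comm (x y : H) : x ⋆̄ y = y ⋆̄ x := by
  induction x using H.induction_on_word generalizing y with
  | zero => simp
  | add x x' hx hx' => simp [hx, hx']
  | smul_word c a =>
    induction y using H.induction_on_word with
    | zero => simp
    | add y y' hy hy' => simp only [map_add, LinearMap.add_apply, hy, hy']
    | smul_word d b => simp [stuffleBarₗ_word, stbar_comm, smul_comm c d]

lemma stuffleBarₗ_word_nil (x : H) : x ⋆̄ word [] = x := by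
  induction x using H.induction_on_word with
  | zero => simp
  | add x x' hx hx' => simp [hx, hx']
  | smul_word c a => simp [stuffleBarₗ_word, stbar_nil_right]

lemma stuffleBarₗ_z_mul_z_mul (k l : ℕ+) (X Y : H) :
    (z k * X) ⋆̄ (z l * Y) =
      z k * (X ⋆̄ (z l * Y)) + z l * ((z k * X) ⋆̄ Y) - z (k + l) * (X ⋆̄ Y) := by
  induction X using H.induction_on_word generalizing Y with
  | zero => simp
  | add X X' hX hX' => simp only [mul_add, map_add, LinearMap.add_apply, hX, hX']; abel
  | smul_word c a =>
    induction Y using H.induction_on_word with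
    | zero => simp
    | add Y Y' hY hY' => simp only [mul_add, map_add, hY, hY']; abel
    | smul_word d b =>
      simp only [mul_smul_comm, map_smul, LinearMap.smul_apply, z_mul_word, stuffleBarₗ_word,
        ← smul_add, ← smul_sub]
      rw [stbar]

lemma stuffleBarₗ_stuffleBarₗ_z_mul (k l n : ℕ+) (X Y W : H) :
    ((z k * X) ⋆̄ (z l * Y)) ⋆̄ (z n * W) =
      z k * ((X ⋆̄ (z l * Y)) ⋆̄ (z n * W)) + z l * (((z k * X) ⋆̄ Y) ⋆̄ (z n * W))
        - z (k + l) * ((X ⋆̄ Y) ⋆̄ (z n * W)) + z n * (((z k * X) ⋆̄ (z l * Y)) ⋆̄ W)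
        - z (k + n) * ((X ⋆̄ (z l * Y)) ⋆̄ W) - z (l + n) * (((z k * X) ⋆̄ Y) ⋆̄ W)
        + z (k + l + n) * ((X ⋆̄ Y) ⋆̄ W) := by
  rw [stuffleBarₗ_z_mul_z_mul k l X Y]
  simp only [map_add, map_sub, LinearMap.add_apply, LinearMap.sub_apply, stuffleBarₗ_z_mul_z_mul,
    mul_add, mul_sub]
  abel

lemma stuffleBarₗ_word_rotate : ∀ a b c : List ℕ+,
    (word a ⋆̄ word b) ⋆̄ word c = (word b ⋆̄ word c) ⋆̄ word a
  | [], b, c => by simp [stbar_nil_left, stuffleBarₗ_word, stuffleBarₗ_word_nil]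
  | k :: a, [], c => by simp [stuffleBarₗ_word, stbar_nil_right, stbar_comm]
  | k :: a, l :: b, [] => by simp [stuffleBarₗ_word, stuffleBarₗ_word_nil, stbar_comm]
  | k :: a, l :: b, n :: c => by
    have lhs := stuffleBarₗ_stuffleBarₗ_z_mul k l n (word a) (word b) (word c)
    have rhs := stuffleBarₗ_stuffleBarₗ_z_mul l n k (word b) (word c) (word a)
    simp only [z_mul_word] at lhs rhs
    rw [lhs, rhs, stuffleBarₗ_word_rotate a (l :: b) (n :: c),
      stuffleBarₗ_word_rotate (k :: a) b (n :: c), stuffleBarₗ_word_rotate a b (n :: c),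
      stuffleBarₗ_word_rotate (k :: a) (l :: b) c, stuffleBarₗ_word_rotate a (l :: b) c,
      stuffleBarₗ_word_rotate (k :: a) b c, stuffleBarₗ_word_rotate a b c,
      add_comm (l + n) k, ← add_assoc, add_comm l k, add_comm n k]
    abel
termination_by a b c => a.length + b.length + c.length

lemma stuffleBarₗ_assoc (x y w : H) : (x ⋆̄ y) ⋆̄ w = x ⋆̄ (y ⋆̄ w) := by
  induction x using H.induction_on_word generalizing y w with
  | zero => simp
  | add x x' hx hx' => simp only [map_add, LinearMap.add_apply, hx, hx']
  | smul_word c a =>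
    induction y using H.induction_on_word generalizing w with
    | zero => simp
    | add y y' hy hy' => simp only [map_add, LinearMap.add_apply, hy, hy']
    | smul_word d b =>
      induction w using H.induction_on_word with
      | zero => simp
      | add w w' hw hw' => simp only [map_add, hw, hw']
      | smul_word e c' =>
        simp only [map_smul, LinearMap.smul_apply, stuffleBarₗ_word_rotate a b c',
          stuffleBarₗ_comm _ (word a)]

theorem stuffleBar_comm_assoc :
    (∀ x y : H, stuffleBar x y = stuffleBar y x) ∧
    (∀ x y w : H, stuffleBar (stuffleBar x y) w = stuffleBar x (stuffleBar y w)) := by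
  simp only [stuffleBar_eq_stuffleBarₗ]
  exact ⟨stuffleBarₗ_comm, stuffleBarₗ_assoc⟩
end

section
/- The linear map Z : h^0 → ℝ sending the word z_{k_1} z_{k_2} ⋯ z_{k_n} (with k_1 ≥ 2) to ζ(k_1,…,k_n) and 1 to 1 is an algebra homomorphism from (h^0, *) to ℝ: Z(w_1 * w_2) = Z(w_1) Z(w_2) for all w_1, w_2 ∈ h^0. -/
open MonoidAlgebra Finset

noncomputable def stuffle (x y : H) : H :=
  Finsupp.sum x.coeff fun w1 c1 =>
    Finsupp.sum y.coeff fun w2 c2 =>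
      (c1 * c2) • st (FreeMonoid.toList w1) (FreeMonoid.toList w2)

/-- The multiple zeta value ζ(k₁,…,kₙ) = ∑_{m₁ > m₂ > ⋯ > mₙ > 0} ∏ᵢ mᵢ^{-kᵢ}. -/
noncomputable def mzv (ks : List ℕ) : ℝ :=
  ∑' m : {f : Fin ks.length → ℕ // (∀ i j : Fin ks.length, i < j → f j < f i) ∧ ∀ i, 0 < f i},
    ∏ i : Fin ks.length, (1 : ℝ) / (m.1 i : ℝ) ^ ks.get i

/-- The linear evaluation map `Z` sending a word `z_{k₁} ⋯ z_{kₙ}` to `ζ(k₁,…,kₙ)`. -/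
noncomputable def Zmap (x : H) : ℝ :=
  Finsupp.sum x.coeff fun w c => (c : ℝ) * mzv ((FreeMonoid.toList w).map fun k => (k : ℕ))

/-- Membership in the subalgebra `h⁰`: every word in the support is empty or starts with a
letter `z_k` with `k ≥ 2`. -/
def memH0 (x : H) : Prop :=
  ∀ w ∈ x.coeff.support, ∀ (k : ℕ+) (t : List ℕ+), FreeMonoid.toList w = k :: t → 2 ≤ (k : ℕ)

/-!
Truncating the series at `m₁ < M` gives finite sums `ζ_M(k₁,…,kₙ)` with
`ζ_M(k :: ks) = ∑_{0 < m < M} m⁻ᵏ ζ_m(ks)`. Splitting a product of two such sums over `m, m' < M`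
according to `m > m'`, `m < m'` or `m = m'` is exactly the recursion defining the stuffle, so the
truncated evaluation is multiplicative on `st` for every `M`. For admissible words `ζ_M → ζ`:
since `ζ_M(ks) ≤ 2ⁿ √M` when all `kᵢ ≥ 1`, a leading exponent `k ≥ 2` makes the outer series
dominated by `m^(-3/2)`. The stuffle of admissible words is a combination of admissible words, so
the identity passes to the limit.
-/

open Filter Topology

theorem tendsto_sum_tsum_of_monotone_of_le {ι : Type*} {f : ι → ℝ} (hf : 0 ≤ f)
    {s : ℕ → Finset ι} (hs : Monotone s) (hs_cover : ∀ i, ∃ M, i ∈ s M) {B : ℝ}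
    (hB : ∀ M, ∑ i ∈ s M, f i ≤ B) :
    Tendsto (fun M => ∑ i ∈ s M, f i) atTop (𝓝 (∑' i, f i)) := by
  have hs_top : Tendsto s atTop atTop := tendsto_atTop_finset_of_monotone hs hs_cover
  have hf_sum : Summable f := summable_of_sum_le hf fun u => by
    obtain ⟨M, hM⟩ := (tendsto_atTop.1 hs_top u).exists
    exact (sum_le_sum_of_subset_of_nonneg hM fun i _ _ => hf i).trans (hB M)
  exact hf_sum.hasSum.comp hs_top

theorem sum_Ico_mul_sum_Ico {R : Type*} [CommSemiring R] (f g : ℕ → R) (a b : ℕ) :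
    (∑ i ∈ Ico a b, f i) * ∑ j ∈ Ico a b, g j =
      ∑ i ∈ Ico a b, f i * ∑ j ∈ Ico a i, g j + ∑ j ∈ Ico a b, g j * ∑ i ∈ Ico a j, f i +
        ∑ i ∈ Ico a b, f i * g i := by
  induction b with
  | zero => simp
  | succ b ih =>
    rcases lt_or_ge b a with hba | hab
    · simp [Ico_eq_empty_of_le (Nat.succ_le_of_lt hba)]
    simp only [sum_Ico_succ_top hab, add_mul, mul_add, ih]
    ring

theorem sum_Icc_one_inv_sqrt_le (N : ℕ) : ∑ m ∈ Icc 1 N, 1 / √(m : ℝ) ≤ 2 * √(N : ℝ) := by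
  induction N with
  | zero => simp
  | succ N ih =>
    rw [sum_Icc_succ_top (by omega)]
    have hN := Real.sq_sqrt (Nat.cast_nonneg (α := ℝ) N)
    have hN1 := Real.sq_sqrt (Nat.cast_nonneg (α := ℝ) (N + 1))
    have hpos : 0 < √((N + 1 : ℕ) : ℝ) := Real.sqrt_pos.2 (by positivity)
    have : 1 / √((N + 1 : ℕ) : ℝ) ≤ 2 * √((N + 1 : ℕ) : ℝ) - 2 * √(N : ℝ) := by
      rw [div_le_iff₀ hpos]
      push_cast at hN1 ⊢
      nlinarith [sq_nonneg (√((N : ℝ) + 1) - √(N : ℝ))]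
    linarith

noncomputable def truncMZV : ℕ → List ℕ → ℝ
  | _, [] => 1
  | M, k :: ks => ∑ m ∈ Ico 1 M, truncMZV m ks / (m : ℝ) ^ k

def IsMZVIndex {n : ℕ} (f : Fin n → ℕ) : Prop := StrictAnti f ∧ ∀ i, 0 < f i

noncomputable def mzvTerm (ks : List ℕ) (f : Fin ks.length → ℕ) : ℝ :=
  ∏ i, 1 / (f i : ℝ) ^ ks.get i

theorem mzv_eq_tsum (ks : List ℕ) :
    mzv ks = ∑' f : {f : Fin ks.length → ℕ // IsMZVIndex f}, mzvTerm ks f := rfl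

theorem mzvTerm_cons (k : ℕ) (ks : List ℕ) (m : ℕ) (g : Fin ks.length → ℕ) :
    mzvTerm (k :: ks) (Fin.cons m g) = mzvTerm ks g / (m : ℝ) ^ k := by
  simp [mzvTerm, Fin.prod_univ_succ, div_eq_mul_inv, mul_comm]

theorem Fin.strictAnti_cons {α : Type*} [Preorder α] {n : ℕ} {a : α} {g : Fin n → α} :
    StrictAnti (Fin.cons a g : Fin (n + 1) → α) ↔ (∀ i, g i < a) ∧ StrictAnti g :=
  Fin.liftFun_cons (· > ·)

theorem isMZVIndex_cons {n m : ℕ} {g : Fin n → ℕ} :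
    IsMZVIndex (Fin.cons m g : Fin (n + 1) → ℕ) ↔ 0 < m ∧ (∀ i, g i < m) ∧ IsMZVIndex g := by
  simp only [IsMZVIndex, Fin.strictAnti_cons, Fin.forall_fin_succ, Fin.cons_zero, Fin.cons_succ]
  tauto

open Classical in
noncomputable def mzvIndicesBelow (M n : ℕ) : Finset (Fin n → ℕ) :=
  {f ∈ Fintype.piFinset fun _ => range M | IsMZVIndex f}

theorem mem_mzvIndicesBelow {M n : ℕ} {f : Fin n → ℕ} :
    f ∈ mzvIndicesBelow M n ↔ (∀ i, f i < M) ∧ IsMZVIndex f := by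
  simp [mzvIndicesBelow]

theorem sum_mzvIndicesBelow_succ {β : Type*} [AddCommMonoid β] (M n : ℕ)
    (F : (Fin (n + 1) → ℕ) → β) :
    ∑ f ∈ mzvIndicesBelow M (n + 1), F f =
      ∑ m ∈ Ico 1 M, ∑ g ∈ mzvIndicesBelow m n, F (Fin.cons m g) := by
  rw [sum_sigma']
  refine sum_bij' (fun f _ => ⟨f 0, Fin.tail f⟩) (fun p _ => Fin.cons p.1 p.2) ?_ ?_ ?_ ?_ ?_
  · intro f hf
    rw [← Fin.cons_self_tail f, mem_mzvIndicesBelow, isMZVIndex_cons] at hf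
    simp only [Fin.forall_fin_succ, Fin.cons_zero, Fin.cons_succ] at hf
    obtain ⟨⟨hf0_lt, -⟩, hf0_pos, htail_lt, htail⟩ := hf
    simp only [mem_sigma, mem_Ico, mem_mzvIndicesBelow]
    exact ⟨⟨hf0_pos, hf0_lt⟩, htail_lt, htail⟩
  · rintro ⟨m, g⟩ hp
    simp only [mem_sigma, mem_Ico, mem_mzvIndicesBelow] at hp
    obtain ⟨⟨hm_pos, hm_lt⟩, hg_lt, hg⟩ := hp
    rw [mem_mzvIndicesBelow, isMZVIndex_cons]
    refine ⟨Fin.forall_fin_succ.2 ⟨by simpa using hm_lt, fun i => ?_⟩, hm_pos, hg_lt, hg⟩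
    simpa using (hg_lt i).trans hm_lt
  · intro f _; exact Fin.cons_self_tail f
  · intro p _; rfl
  · intro f _; simp

theorem sum_mzvIndicesBelow_mzvTerm (M : ℕ) (ks : List ℕ) :
    ∑ f ∈ mzvIndicesBelow M ks.length, mzvTerm ks f = truncMZV M ks := by
  induction ks generalizing M with
  | nil =>
    have : mzvIndicesBelow M 0 = {Fin.elim0} := by
      ext f
      simp [mem_mzvIndicesBelow, IsMZVIndex, Subsingleton.elim f Fin.elim0, Subsingleton.strictAnti]
    simp [this, mzvTerm, truncMZV]
  | cons k ks ih =>
    simp only [List.length_cons, sum_mzvIndicesBelow_succ, mzvTerm_cons, ← sum_div, ih, truncMZV]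

theorem truncMZV_nonneg (M : ℕ) (ks : List ℕ) : 0 ≤ truncMZV M ks := by
  induction ks generalizing M with
  | nil => simp [truncMZV]
  | cons k ks ih => exact sum_nonneg fun m _ => div_nonneg (ih m) (by positivity)

theorem truncMZV_le_sqrt {ks : List ℕ} (hks : ∀ k ∈ ks, 0 < k) {M : ℕ} (hM : 1 ≤ M) :
    truncMZV M ks ≤ 2 ^ ks.length * √(M : ℝ) := by
  induction ks generalizing M with
  | nil => simpa [truncMZV] using Real.one_le_sqrt.2 (by exact_mod_cast hM : (1 : ℝ) ≤ M)
  | cons k ks ih =>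
    have hk : 0 < k := hks k List.mem_cons_self
    have hterm : ∀ m ∈ Ico 1 M, truncMZV m ks / (m : ℝ) ^ k ≤ 2 ^ ks.length * (1 / √(m : ℝ)) := by
      intro m hm
      have hm1 : (1 : ℝ) ≤ m := by exact_mod_cast (mem_Ico.1 hm).1
      calc truncMZV m ks / (m : ℝ) ^ k
          ≤ 2 ^ ks.length * √(m : ℝ) / m :=
            div_le_div₀ (by positivity) (ih (fun j hj => hks j (List.mem_cons_of_mem k hj))
              (mem_Ico.1 hm).1) (by positivity) (le_self_pow₀ hm1 hk.ne')
        _ = 2 ^ ks.length * (1 / √(m : ℝ)) := by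
            rw [mul_div_assoc, Real.sqrt_div_self', one_div]
    calc truncMZV M (k :: ks) ≤ ∑ m ∈ Ico 1 M, 2 ^ ks.length * (1 / √(m : ℝ)) :=
          sum_le_sum hterm
      _ ≤ 2 ^ ks.length * ∑ m ∈ Icc 1 M, 1 / √(m : ℝ) := by
          rw [← mul_sum]
          gcongr
          exact Ico_subset_Icc_self
      _ ≤ 2 ^ (k :: ks).length * √(M : ℝ) := by
          rw [List.length_cons, pow_succ, mul_assoc]
          gcongr
          exact sum_Icc_one_inv_sqrt_le M

theorem summable_truncMZV_div_pow {k : ℕ} (hk : 2 ≤ k) {ks : List ℕ} (hks : ∀ j ∈ ks, 0 < j) :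
    Summable fun m : ℕ => truncMZV m ks / (m : ℝ) ^ k := by
  refine .of_nonneg_of_le (fun m => div_nonneg (truncMZV_nonneg m ks) (by positivity)) (fun m => ?_)
    ((Real.summable_nat_rpow_inv.2 (by norm_num : (1 : ℝ) < 3 / 2)).mul_left (2 ^ ks.length))
  rcases Nat.eq_zero_or_pos m with rfl | hm
  · simp [zero_pow (by omega : k ≠ 0)]
  have hm1 : (1 : ℝ) ≤ m := by exact_mod_cast hm
  have hm0 : (0 : ℝ) < m := by positivity
  have hrpow : (m : ℝ) ^ (3 / 2 : ℝ) = m * √(m : ℝ) := by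
    rw [show (3 / 2 : ℝ) = 1 + 1 / 2 by norm_num, Real.rpow_add hm0, Real.rpow_one,
      Real.sqrt_eq_rpow]
  have hsqrt : √(m : ℝ) * √(m : ℝ) = m := Real.mul_self_sqrt hm0.le
  calc truncMZV m ks / (m : ℝ) ^ k ≤ 2 ^ ks.length * √(m : ℝ) / (m : ℝ) ^ 2 :=
        div_le_div₀ (by positivity) (truncMZV_le_sqrt hks hm) (by positivity)
          (pow_le_pow_right₀ hm1 hk)
    _ = 2 ^ ks.length * ((m : ℝ) ^ (3 / 2 : ℝ))⁻¹ := by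
        rw [hrpow]
        field_simp
        linear_combination hsqrt

theorem tendsto_truncMZV {ks : List ℕ} (hks : ∀ k ∈ ks, 0 < k) (hhead : ∀ k ∈ ks.head?, 2 ≤ k) :
    Tendsto (fun M => truncMZV M ks) atTop (𝓝 (mzv ks)) := by
  classical
  obtain ⟨B, hB⟩ : ∃ B, ∀ M, truncMZV M ks ≤ B := by
    cases ks with
    | nil => exact ⟨1, fun M => le_rfl⟩
    | cons k ks =>
      have hsum := summable_truncMZV_div_pow (hhead k rfl) fun j hj => hks j (.tail k hj)
      exact ⟨_, fun M =>
        hsum.sum_le_tsum _ fun m _ => div_nonneg (truncMZV_nonneg m ks) (by positivity)⟩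
  let s M := (mzvIndicesBelow M ks.length).subtype IsMZVIndex
  have hs : ∀ M, ∑ f ∈ s M, mzvTerm ks f = truncMZV M ks := fun M => by
    rw [sum_subtype_of_mem (mzvTerm ks) fun f hf => (mem_mzvIndicesBelow.1 hf).2,
      sum_mzvIndicesBelow_mzvTerm]
  have hs_mono : Monotone s := fun M M' hMM' f hf => by
    simp only [s, mem_subtype, mem_mzvIndicesBelow] at hf ⊢
    exact ⟨fun i => (hf.1 i).trans_le hMM', hf.2⟩
  have hs_cover : ∀ f, ∃ M, f ∈ s M := fun f =>
    ⟨∑ i, f.1 i + 1, by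
      simp only [s, mem_subtype, mem_mzvIndicesBelow]
      exact ⟨fun i => Nat.lt_succ_of_le (single_le_sum (fun _ _ => Nat.zero_le _) (mem_univ i)),
        f.2⟩⟩
  rw [mzv_eq_tsum]
  simp only [← hs]
  exact tendsto_sum_tsum_of_monotone_of_le (fun f => prod_nonneg fun i _ => by positivity)
    hs_mono hs_cover (B := B) fun M => (hs M).trans_le (hB M)

def IsAdmissible (l : List ℕ+) : Prop := ∀ (k : ℕ+) (t : List ℕ+), l = k :: t → 2 ≤ (k : ℕ)

theorem tendsto_truncMZV_of_isAdmissible {l : List ℕ+} (hl : IsAdmissible l) :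
    Tendsto (fun M => truncMZV M (l.map (↑))) atTop (𝓝 (mzv (l.map (↑)))) := by
  refine tendsto_truncMZV (by simp) ?_
  cases l with
  | nil => simp
  | cons k t => simpa using hl k t rfl

noncomputable def evalWords (g : List ℕ+ → ℝ) : H →+ ℝ where
  toFun x := x.coeff.sum fun w c => (c : ℝ) * g (FreeMonoid.toList w)
  map_zero' := Finsupp.sum_zero_index
  map_add' x y := Finsupp.sum_add_index' (by simp) fun _ _ _ => by push_cast; ring

theorem evalWords_single (g : List ℕ+ → ℝ) (w : FreeMonoid ℕ+) (c : ℚ) :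
    evalWords g (single w c) = c * g (FreeMonoid.toList w) :=
  show (Finsupp.single w c).sum (fun w c => (c : ℝ) * g (FreeMonoid.toList w)) = _ from
    Finsupp.sum_single_index (by simp)

theorem evalWords_stuffle (g : List ℕ+ → ℝ) (P : List ℕ+ → Prop)
    (hst : ∀ l₁ l₂, P l₁ → P l₂ → evalWords g (st l₁ l₂) = g l₁ * g l₂) {x y : H}
    (hx : ∀ w ∈ x.coeff.support, P (FreeMonoid.toList w))
    (hy : ∀ w ∈ y.coeff.support, P (FreeMonoid.toList w)) :
    evalWords g (stuffle x y) = evalWords g x * evalWords g y := by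
  simp only [stuffle, map_finsuppSum, map_rat_smul, Rat.smul_def]
  change _ = (x.coeff.sum fun w c => _) * (y.coeff.sum fun w c => _)
  rw [Finsupp.sum_mul]
  refine Finsupp.sum_congr fun w₁ hw₁ => ?_
  rw [Finsupp.mul_sum]
  refine Finsupp.sum_congr fun w₂ hw₂ => ?_
  rw [hst _ _ (hx w₁ hw₁) (hy w₂ hw₂)]
  push_cast
  ring

theorem tendsto_evalWords {α : Type*} {F : Filter α} {G : α → List ℕ+ → ℝ} {g : List ℕ+ → ℝ}
    {x : H} (h : ∀ w ∈ x.coeff.support,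
      Tendsto (fun a => G a (FreeMonoid.toList w)) F (𝓝 (g (FreeMonoid.toList w)))) :
    Tendsto (fun a => evalWords (G a) x) F (𝓝 (evalWords g x)) :=
  tendsto_finsetSum _ fun w hw => (h w hw).const_mul _

noncomputable def truncZmap (M : ℕ) : H →+ ℝ := evalWords fun l => truncMZV M (l.map (↑))

theorem truncZmap_z_mul (M : ℕ) (k : ℕ+) (v : H) :
    truncZmap M (z k * v) = ∑ m ∈ Ico 1 M, truncZmap m v / (m : ℝ) ^ (k : ℕ) := by
  induction v using MonoidAlgebra.induction_linear with
  | zero => simp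
  | add v₁ v₂ h₁ h₂ => simp only [mul_add, map_add, h₁, h₂, add_div, sum_add_distrib]
  | single w c =>
    simp only [truncZmap, z, word, single_mul_single, one_mul, evalWords_single,
      FreeMonoid.toList_mul, FreeMonoid.toList_ofList, List.singleton_append, List.map_cons,
      truncMZV, mul_sum, mul_div_assoc]

theorem truncZmap_word (M : ℕ) (l : List ℕ+) : truncZmap M (word l) = truncMZV M (l.map (↑)) := by
  simp [truncZmap, word, evalWords_single]

theorem truncZmap_st (M : ℕ) (l₁ l₂ : List ℕ+) :
    truncZmap M (st l₁ l₂) = truncMZV M (l₁.map (↑)) * truncMZV M (l₂.map (↑)) := by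
  induction l₁, l₂ using st.induct generalizing M with
  | case1 l => simp [st, truncZmap_word, truncMZV]
  | case2 k l => simp [st, truncZmap_word, truncMZV]
  | case3 k l₁ l l₂ ih₁ ih₂ ih₃ =>
    rw [st, map_add, map_add, truncZmap_z_mul, truncZmap_z_mul, truncZmap_z_mul]
    simp only [ih₁, ih₂, ih₃, List.map_cons, truncMZV, PNat.add_coe, pow_add]
    rw [sum_Ico_mul_sum_Ico]
    refine congrArg₂ (· + ·) (congrArg₂ (· + ·) ?_ ?_) ?_ <;> exact sum_congr rfl fun _ _ => by ring

theorem memH0_add {x y : H} (hx : memH0 x) (hy : memH0 y) : memH0 (x + y) := by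
  classical
  exact fun w hw => (mem_union.1 (Finsupp.support_add hw)).elim (hx w) (hy w)

theorem memH0_single_of_isAdmissible {w : FreeMonoid ℕ+} (hw : IsAdmissible (FreeMonoid.toList w))
    (c : ℚ) : memH0 (single w c) := fun _ hw' => by
  classical
  rw [coeff_single] at hw'
  rw [mem_singleton.1 (Finsupp.support_single_subset hw')]
  exact hw

theorem memH0_z_mul {k : ℕ+} (hk : 2 ≤ (k : ℕ)) (v : H) : memH0 (z k * v) := by
  induction v using MonoidAlgebra.induction_linear with
  | zero => simp [memH0]
  | add v₁ v₂ h₁ h₂ => rw [mul_add]; exact memH0_add h₁ h₂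
  | single w c =>
    rw [z, word, single_mul_single]
    refine memH0_single_of_isAdmissible (fun k' t h => ?_) _
    simp only [FreeMonoid.toList_mul, FreeMonoid.toList_ofList, List.singleton_append,
      List.cons.injEq] at h
    exact h.1 ▸ hk

theorem memH0_st {l₁ l₂ : List ℕ+} (h₁ : IsAdmissible l₁) (h₂ : IsAdmissible l₂) :
    memH0 (st l₁ l₂) := by
  match l₁, l₂ with
  | [], l₂ => rw [st]; exact memH0_single_of_isAdmissible h₂ 1
  | k :: t₁, [] => rw [st]; exact memH0_single_of_isAdmissible h₁ 1
  | k :: t₁, l :: t₂ =>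
    have hk : 2 ≤ (k : ℕ) := h₁ k t₁ rfl
    have hl : 2 ≤ (l : ℕ) := h₂ l t₂ rfl
    rw [st]
    exact memH0_add (memH0_add (memH0_z_mul hk _) (memH0_z_mul hl _))
      (memH0_z_mul (by rw [PNat.add_coe]; omega) _)

-- In `Zmap` the list is coerced to `List ℕ` through the list monad (`l >>= pure ∘ PNat.val`),
-- so this is not `rfl`.
theorem Zmap_eq_evalWords (x : H) : Zmap x = evalWords (fun l => mzv (l.map (↑))) x := by
  simp only [Zmap, List.pure_def, List.bind_eq_flatMap, List.map_id_fun', id_eq,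
    ← List.map_eq_flatMap]
  rfl

theorem evalWords_mzv_st {l₁ l₂ : List ℕ+} (h₁ : IsAdmissible l₁) (h₂ : IsAdmissible l₂) :
    evalWords (fun l => mzv (l.map (↑))) (st l₁ l₂) = mzv (l₁.map (↑)) * mzv (l₂.map (↑)) := by
  have h_trunc : Tendsto (fun M => truncZmap M (st l₁ l₂)) atTop
      (𝓝 (evalWords (fun l => mzv (l.map (↑))) (st l₁ l₂))) :=
    tendsto_evalWords fun w hw => tendsto_truncMZV_of_isAdmissible (memH0_st h₁ h₂ w hw)
  simp only [truncZmap_st] at h_trunc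
  exact tendsto_nhds_unique h_trunc
    ((tendsto_truncMZV_of_isAdmissible h₁).mul (tendsto_truncMZV_of_isAdmissible h₂))

theorem Zmap_stuffle (x y : H) (hx : memH0 x) (hy : memH0 y) :
    Zmap (stuffle x y) = Zmap x * Zmap y := by
  simp only [Zmap_eq_evalWords]
  exact evalWords_stuffle _ IsAdmissible (fun _ _ => evalWords_mzv_st) hx hy
end
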